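/- (Rejection completeness of validatorOf.) For every program p : Prog and every trace t : List (ℤ × ℤ), if the validator validatorOf p accepts t (i.e., there exists a final validator state v' such that the validator consumes t from its initial state v₀ := {((fun _ => 0), {var 0 = const 0})} to v'), then the server serverOf p produces trace t from its initial state s₀ := (fun _ => 0) (i.e., there exists a final memory s' such that the server produces t from s₀ to s'). -/
import Mathlib


/-- Variables are natural numbers. -/
abbrev Var := ℕ

/-- Binary integer operations: +, −, ×, ÷ (integer division). -/
inductive Op
  | add | sub | mul | div
deriving DecidableEq

def Op.denote : Op → ℤ → ℤ → ℤ
  | .add => (· + ·)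
  | .sub => (· - ·)
  | .mul => (· * ·)
  | .div => (· / ·)

/-- Symbolic server expressions. -/
inductive SExp
  | const : ℤ → SExp
  | read : ℕ → SExp
  | bin : Op → SExp → SExp → SExp
deriving DecidableEq

/-- Evaluation of a server expression on a memory `s : ℕ → ℤ`, written `e^s`. -/
def SExp.eval (s : ℕ → ℤ) : SExp → ℤ
  | .const z => z
  | .read k => s k
  | .bin op e₁ e₂ => op.denote (e₁.eval s) (e₂.eval s)

/-- Validator expressions. -/
inductive VExp
  | const : ℤ → VExp
  | var : Var → VExp
  | bin : Op → VExp → VExp → VExp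
deriving DecidableEq

/-- Evaluation of a validator expression under an assignment, written `e^asgn`. -/
def VExp.eval (asgn : Var → ℤ) : VExp → ℤ
  | .const z => z
  | .var x => asgn x
  | .bin op e₁ e₂ => op.denote (e₁.eval asgn) (e₂.eval asgn)

/-- Symbolization `e^vs` of a server expression: replace every `read src` by `var (vs src)`. -/
def SExp.symb (vs : ℕ → Var) : SExp → VExp
  | .const z => .const z
  | .read k => .var (vs k)
  | .bin op e₁ e₂ => .bin op (e₁.symb vs) (e₂.symb vs)

/-- Comparison operators for constraints: <, ≤, =. -/
inductive Cmp
  | lt | le | eq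
deriving DecidableEq

def Cmp.holds : Cmp → ℤ → ℤ → Prop
  | .lt => (· < ·)
  | .le => (· ≤ ·)
  | .eq => (· = ·)

/-- A constraint is a triple of two validator expressions and a comparison. -/
structure Constraint where
  lhs : VExp
  cmp : Cmp
  rhs : VExp
deriving DecidableEq

/-- `asgn` satisfies the constraint set `cs`. -/
def Sat (asgn : Var → ℤ) (cs : Finset Constraint) : Prop :=
  ∀ c ∈ cs, c.cmp.holds (c.lhs.eval asgn) (c.rhs.eval asgn)

/-- A variable occurs in a validator expression. -/
def VExp.occurs (x : Var) : VExp → Prop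
  | .const _ => False
  | .var y => y = x
  | .bin _ e₁ e₂ => e₁.occurs x ∨ e₂.occurs x

/-- `x` is fresh for the constraint set `cs`: it occurs in no constraint of `cs`. -/
def FreshCs (x : Var) (cs : Finset Constraint) : Prop :=
  ∀ c ∈ cs, ¬ c.lhs.occurs x ∧ ¬ c.rhs.occurs x

/-- `x` is fresh for `vs : ℕ → Var`. -/
def FreshVs (x : Var) (vs : ℕ → Var) : Prop :=
  ∀ k : ℕ, vs k ≠ x

/-- One more than the largest variable occurring in a validator expression
(a strict upper bound on its variables). -/
def VExp.maxVar : VExp → ℕ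
  | .const _ => 0
  | .var x => x + 1
  | .bin _ e₁ e₂ => max e₁.maxVar e₂.maxVar

def Constraint.maxVar (c : Constraint) : ℕ :=
  max c.lhs.maxVar c.rhs.maxVar

/-- A validation state: a map from addresses to their representing variables
(with finite support, so that fresh variables exist), and a finite set of
constraints. -/
abbrev VState := (ℕ →₀ ℕ) × Finset Constraint

/-- A fixed variable fresh for both `vs` and `cs`. -/
def freshVar (vs : ℕ →₀ ℕ) (cs : Finset Constraint) : Var :=
  max (vs.support.sup ⇑vs) (cs.sup Constraint.maxVar) + 1

/-- The write rule on validation states. -/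
noncomputable def writeV (d : ℕ) (e : SExp) (w : VState) : VState :=
  let x := freshVar w.1 w.2
  (w.1.update d x, insert ⟨VExp.var x, Cmp.eq, e.symb w.1⟩ w.2)

/-- The havoc rule on validation states. -/
noncomputable def havocV (d : ℕ) (w : VState) : VState :=
  (w.1.update d (freshVar w.1 w.2), w.2)

/-- Programs in the `Prog` language. -/
inductive Prog
  | ret
  | write (dst : ℕ) (e : SExp) (p : Prog)
  | branch (e₁ e₂ : SExp) (p₁ p₂ : Prog)

/-- Semantics of `Prog` on integer memories. -/
def evalProg : Prog → (ℕ → ℤ) → (ℕ → ℤ)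
  | .ret, s => s
  | .write d e p, s => evalProg p (Function.update s d (e.eval s))
  | .branch e₁ e₂ p₁ p₂, s =>
      if e₁.eval s ≤ e₂.eval s then evalProg p₁ s else evalProg p₂ s

/-- The symbolic executor on validation states. -/
noncomputable def exec : Prog → VState → Finset VState
  | .ret, w => {w}
  | .write d e p, w => exec p (writeV d e w)
  | .branch e₁ e₂ p₁ p₂, w =>
      exec p₁ (w.1, insert ⟨e₁.symb w.1, Cmp.le, e₂.symb w.1⟩ w.2) ∪
      exec p₂ (w.1, insert ⟨e₂.symb w.1, Cmp.lt, e₁.symb w.1⟩ w.2)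

/-- A constraint set is solvable iff some assignment satisfies it. -/
def Solvable (cs : Finset Constraint) : Prop :=
  ∃ asgn : Var → ℤ, Sat asgn cs

/-- The step function of the server derived from program `p`:
write the choice to address 0 and the query to address 1, run `p`,
and answer with the value at address 1. -/
def sstepP (p : Prog) (q c : ℤ) (s : ℕ → ℤ) : ℤ × (ℕ → ℤ) :=
  let s₃ := evalProg p (Function.update (Function.update s 0 c) 1 q)
  (s₃ 1, s₃)

open Classical in
/-- The step function of the validator derived from program `p`. -/
noncomputable def vstepP (p : Prog) (q a : ℤ) (v : Finset VState) :
    Option (Finset VState) :=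
  let v' : Finset VState := v.biUnion (fun w =>
    let w₂ := writeV 1 (SExp.const q) (havocV 0 w)
    (exec p w₂).biUnion (fun w₃ =>
      let cs₄ := insert ⟨VExp.var (w₃.1 1), Cmp.eq, VExp.const a⟩ w₃.2
      if Solvable cs₄ then {(w₃.1, cs₄)} else ∅))
  if v' = ∅ then none else some v'

/-- The server `serverOf p` produces trace `t` from memory `s` to memory `s'`. -/
inductive ProducesP (p : Prog) : (ℕ → ℤ) → List (ℤ × ℤ) → (ℕ → ℤ) → Prop
  | nil (s : ℕ → ℤ) : ProducesP p s [] s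
  | snoc {s s₁ s₂ : ℕ → ℤ} {t : List (ℤ × ℤ)} {q a : ℤ} (c : ℤ)
      (h : ProducesP p s t s₁) (hs : sstepP p q c s₁ = (a, s₂)) :
      ProducesP p s (t ++ [(q, a)]) s₂

/-- The validator `validatorOf p` consumes trace `t` from state `v` to state `v'`. -/
inductive ConsumesP (p : Prog) : Finset VState → List (ℤ × ℤ) → Finset VState → Prop
  | nil (v : Finset VState) : ConsumesP p v [] v
  | snoc {v v₁ v₂ : Finset VState} {t : List (ℤ × ℤ)} {q a : ℤ}
      (h : ConsumesP p v t v₁) (hv : vstepP p q a v₁ = some v₂) :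
      ConsumesP p v (t ++ [(q, a)]) v₂

/-- Initial server state: all addresses hold 0. -/
def initMem : ℕ → ℤ := fun _ => 0

/-- Initial validator state: all addresses map to variable 0, constrained to be 0. -/
def initVal : Finset VState :=
  {((0 : ℕ →₀ ℕ), ({⟨VExp.var 0, Cmp.eq, VExp.const 0⟩} : Finset Constraint))}

lemma symb_eval (vs : ℕ →₀ ℕ) (asgn : Var → ℤ) (e : SExp) :
    (e.symb ⇑vs).eval asgn = e.eval (fun k => asgn (vs k)) := by
  induction e <;> simp [SExp.symb, SExp.eval, VExp.eval, *]

lemma sat_mono {asgn : Var → ℤ} {c : Constraint} {cs : Finset Constraint}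
    (h : Sat asgn (insert c cs)) : Sat asgn cs :=
  fun c' hc' => h c' (Finset.mem_insert_of_mem hc')

lemma sat_head {asgn : Var → ℤ} {c : Constraint} {cs : Finset Constraint}
    (h : Sat asgn (insert c cs)) :
    c.cmp.holds (c.lhs.eval asgn) (c.rhs.eval asgn) := h c (Finset.mem_insert_self _ _)

lemma exec_sound (p : Prog) : ∀ (w w' : VState), w' ∈ exec p w → ∀ asgn, Sat asgn w'.2 →
    Sat asgn w.2 ∧ evalProg p (fun k => asgn (w.1 k)) = (fun k => asgn (w'.1 k)) := by
  induction p with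
  | ret =>
    intro w w' hw asgn hs
    simp only [exec, Finset.mem_singleton] at hw
    subst hw
    exact ⟨hs, rfl⟩
  | write d e p ih =>
    intro w w' hw asgn hs
    simp only [exec] at hw
    obtain ⟨h1, h2⟩ := ih _ _ hw asgn hs
    simp only [writeV] at h1 h2
    have hx : asgn (freshVar w.1 w.2) = e.eval (fun k => asgn (w.1 k)) := by
      have := sat_head h1
      simpa [Cmp.holds, VExp.eval, symb_eval] using this
    refine ⟨sat_mono h1, ?_⟩
    have hmem : Function.update (fun k => asgn (w.1 k)) d
        (e.eval (fun k => asgn (w.1 k)))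
        = (fun k => asgn ((w.1.update d (freshVar w.1 w.2)) k)) := by
      funext k
      by_cases hk : k = d <;>
        simp [hk, Function.update, Finsupp.coe_update, hx]
    rw [evalProg, hmem, h2]
  | branch e₁ e₂ p₁ p₂ ih₁ ih₂ =>
    intro w w' hw asgn hs
    simp only [exec, Finset.mem_union] at hw
    rcases hw with hw | hw
    · obtain ⟨h1, h2⟩ := ih₁ _ _ hw asgn hs
      have hc := sat_head h1
      simp only [Cmp.holds, symb_eval] at hc
      refine ⟨sat_mono h1, ?_⟩
      rw [evalProg, if_pos hc]
      exact h2
    · obtain ⟨h1, h2⟩ := ih₂ _ _ hw asgn hs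
      have hc := sat_head h1
      simp only [Cmp.holds, symb_eval] at hc
      refine ⟨sat_mono h1, ?_⟩
      rw [evalProg, if_neg (not_le.mpr hc)]
      exact h2

lemma vstep_sound {p : Prog} {q a : ℤ} {v v₂ : Finset VState}
    (hv : vstepP p q a v = some v₂) :
    v₂.Nonempty ∧ ∀ w' ∈ v₂, Solvable w'.2 ∧
      ∀ asgn, Sat asgn w'.2 → ∃ w ∈ v, ∃ c : ℤ, Sat asgn w.2 ∧
        sstepP p q c (fun k => asgn (w.1 k)) = (a, fun k => asgn (w'.1 k)) := by
  classical
  unfold vstepP at hv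
  simp only at hv
  split_ifs at hv with hne
  rw [Option.some_inj] at hv
  subst hv
  refine ⟨Finset.nonempty_iff_ne_empty.mpr hne, ?_⟩
  intro w' hw'
  simp only [Finset.mem_biUnion] at hw'
  obtain ⟨w, hwv, w₃, hw₃, hmem⟩ := hw'
  by_cases hsolv : Solvable (insert ⟨VExp.var (w₃.1 1), Cmp.eq, VExp.const a⟩ w₃.2)
  swap
  · simp [hsolv] at hmem
  simp only [if_pos hsolv, Finset.mem_singleton] at hmem
  subst hmem
  refine ⟨hsolv, ?_⟩
  intro asgn hsat
  have hsat3 : Sat asgn w₃.2 := sat_mono hsat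
  have ha : asgn (w₃.1 1) = a := by
    have := sat_head hsat
    simpa [Cmp.holds, VExp.eval] using this
  obtain ⟨h1, h2⟩ := exec_sound p _ _ hw₃ asgn hsat3
  simp only [writeV, havocV] at h1 h2
  have hq : asgn (freshVar ((w.1.update 0 (freshVar w.1 w.2))) w.2) = q := by
    have := sat_head h1
    simpa [Cmp.holds, VExp.eval, SExp.symb, havocV] using this
  refine ⟨w, hwv, asgn (freshVar w.1 w.2), sat_mono h1, ?_⟩
  unfold sstepP
  simp only
  have hmem_eq :
      (Function.update (Function.update (fun k => asgn (w.1 k)) 0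
        (asgn (freshVar w.1 w.2))) 1 q)
      = (fun k => asgn (((w.1.update 0 (freshVar w.1 w.2)).update 1
          (freshVar ((w.1.update 0 (freshVar w.1 w.2))) w.2)) k)) := by
    funext k
    rcases k with _ | _ | k <;>
      simp [Function.update, Finsupp.coe_update, hq, havocV]
  rw [hmem_eq, h2]
  simp [ha]

lemma consumes_sound {p : Prog} {t : List (ℤ × ℤ)} {v' : Finset VState}
    (h : ConsumesP p initVal t v') :
    (∃ w ∈ v', Solvable w.2) ∧
      ∀ w ∈ v', ∀ asgn, Sat asgn w.2 →
        ProducesP p initMem t (fun k => asgn (w.1 k)) := by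
  induction h with
  | nil =>
    constructor
    · refine ⟨((0 : ℕ →₀ ℕ), ({⟨VExp.var 0, Cmp.eq, VExp.const 0⟩} : Finset Constraint)),
        by simp [initVal], fun _ => 0, ?_⟩
      intro c hc
      simp only [Finset.mem_singleton] at hc
      subst hc
      simp [Cmp.holds, VExp.eval]
    · intro w hw asgn hsat
      simp only [initVal, Finset.mem_singleton] at hw
      subst hw
      have h0 : asgn 0 = 0 := by
        have := hsat _ (Finset.mem_singleton_self _)
        simpa [Cmp.holds, VExp.eval] using this
      have : (fun k => asgn (((0 : ℕ →₀ ℕ)) k)) = initMem := by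
        funext k; simp [initMem, h0]
      rw [this]
      exact ProducesP.nil _
  | snoc h hv ih =>
    obtain ⟨hne, hall⟩ := vstep_sound hv
    constructor
    · obtain ⟨w', hw'⟩ := hne
      exact ⟨w', hw', (hall w' hw').1⟩
    · intro w' hw' asgn hsat
      obtain ⟨w, hwv, c, hsatw, hstep⟩ := (hall w' hw').2 asgn hsat
      exact ProducesP.snoc c (ih.2 w hwv asgn hsatw) hstep

/-- Rejection completeness of `validatorOf p`. -/
theorem validatorOf_complete (p : Prog) (t : List (ℤ × ℤ))
    (h : ∃ v' : Finset VState, ConsumesP p initVal t v') :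
    ∃ s' : ℕ → ℤ, ProducesP p initMem t s' := by
  obtain ⟨v', hc⟩ := h
  obtain ⟨⟨w, hw, asgn, hsat⟩, hinv⟩ := consumes_sound hc
  exact ⟨_, hinv w hw asgn hsat⟩
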